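/- For any continuous functions f, g : T → ℂ on the unit circle, the difference A(f,g) − B(f,g) is a compact operator on ℓ²(ℤ). -/

import Mathlib

noncomputable section
open Complex ContinuousLinearMap Filter
open scoped ENNReal ComplexConjugate

/-- The Hilbert space `ℓ²(ℤ)`. -/
abbrev l2Z : Type := lp (fun _ : ℤ => ℂ) 2

lemma memℓp_comp_equiv (e : ℤ ≃ ℤ) {f : ℤ → ℂ} (hf : Memℓp f 2) :
    Memℓp (fun x => f (e x)) 2 := by
  apply memℓp_gen
  have h := hf.summable (by norm_num : (0:ℝ) < (2 : ℝ≥0∞).toReal)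
  exact e.summable_iff.mpr h

/-- The left shift `(Lψ)(x) = ψ(x+1)` as a linear isometry equivalence of `ℓ²(ℤ)`. -/
def shiftL : l2Z ≃ₗᵢ[ℂ] l2Z where
  toFun ψ := ⟨fun x => ψ (x + 1), memℓp_comp_equiv (Equiv.addRight 1) (lp.memℓp ψ)⟩
  invFun ψ := ⟨fun x => ψ (x - 1), memℓp_comp_equiv (Equiv.subRight 1) (lp.memℓp ψ)⟩
  map_add' ψ φ := rfl
  map_smul' c ψ := rfl
  left_inv ψ := by ext x; simp
  right_inv ψ := by ext x; simp
  norm_map' ψ := by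
    have h2 : (0:ℝ) < (2 : ℝ≥0∞).toReal := by norm_num
    rw [lp.norm_eq_tsum_rpow h2, lp.norm_eq_tsum_rpow h2]
    congr 1
    exact (Equiv.addRight (1:ℤ)).tsum_eq (fun x => ‖ψ x‖ ^ (2 : ℝ≥0∞).toReal)

/-- The left shift `L` on `ℓ²(ℤ)` as a continuous linear map. -/
def Lop : l2Z →L[ℂ] l2Z := shiftL.toLinearIsometry.toContinuousLinearMap

/-- The closed subspace of `ℓ²(ℤ)` spanned by the basis vectors `|x⟩` for `x ≥ 0`. -/
def spanGe : Submodule ℂ l2Z :=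
  (Submodule.span ℂ {v : l2Z | ∃ x : ℤ, 0 ≤ x ∧ v = lp.single 2 x 1}).topologicalClosure

/-- The closed subspace of `ℓ²(ℤ)` spanned by the basis vectors `|x⟩` for `x ≤ -1`. -/
def spanLe : Submodule ℂ l2Z :=
  (Submodule.span ℂ {v : l2Z | ∃ x : ℤ, x ≤ -1 ∧ v = lp.single 2 x 1}).topologicalClosure

instance : CompleteSpace spanGe := (Submodule.isClosed_topologicalClosure _).completeSpace_coe
instance : CompleteSpace spanLe := (Submodule.isClosed_topologicalClosure _).completeSpace_coe

/-- The orthogonal projection `P_{≥0}` of `ℓ²(ℤ)` onto the closed span of `{|x⟩ : x ≥ 0}`. -/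
def Pge : l2Z →L[ℂ] l2Z := spanGe.subtypeL ∘L (Submodule.orthogonalProjectionOnto spanGe)

/-- The orthogonal projection `P_{≤-1}` of `ℓ²(ℤ)` onto the closed span of `{|x⟩ : x ≤ -1}`. -/
def Ple : l2Z →L[ℂ] l2Z := spanLe.subtypeL ∘L (Submodule.orthogonalProjectionOnto spanLe)

/-- The unit circle `𝕋 ⊆ ℂ`. -/
abbrev TCirc : Set ℂ := Metric.sphere (0 : ℂ) 1

open scoped Classical in
/-- The extension of a continuous function on the circle to `ℂ` (junk value off the circle). -/
def circExt (f : C(TCirc, ℂ)) : ℂ → ℂ := fun z => if hz : z ∈ TCirc then f ⟨z, hz⟩ else 0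

/-- `h(T)`: the continuous functional calculus of `h ∈ C(𝕋)` applied to an operator `T`
(for `T` the bilateral shift, a unitary operator, the spectrum lies in `𝕋`, so this is the
usual continuous functional calculus of the unitary `T`). -/
def opC (f : C(TCirc, ℂ)) (T : l2Z →L[ℂ] l2Z) : l2Z →L[ℂ] l2Z := cfc (circExt f) T

/-- The operator `A(f,g) = g(L)P_{≥0} + f(L)P_{≤-1}` on `ℓ²(ℤ)`. -/
def Aop (f g : C(TCirc, ℂ)) : l2Z →L[ℂ] l2Z := opC g Lop ∘L Pge + opC f Lop ∘L Ple

/-- The operator `B(f,g) = P_{≥0}g(L)P_{≥0} + P_{≤-1}f(L)P_{≤-1}` on `ℓ²(ℤ)`. -/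
def Bop (f g : C(TCirc, ℂ)) : l2Z →L[ℂ] l2Z :=
  Pge ∘L opC g Lop ∘L Pge + Ple ∘L opC f Lop ∘L Ple



section ProjFormula

variable (P : ℤ → Prop) [DecidablePred P]

lemma memℓp_trunc (ψ : l2Z) : Memℓp (fun x => if P x then ψ x else 0) 2 := by
  apply memℓp_gen
  have h := (lp.memℓp ψ).summable (by norm_num : (0:ℝ) < (2 : ℝ≥0∞).toReal)
  refine Summable.of_nonneg_of_le (fun x => by positivity) (fun x => ?_) h
  by_cases hx : P x
  · simp [hx]
  · simp only [hx, if_false, norm_zero]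
    exact Real.rpow_le_rpow le_rfl (norm_nonneg _) ENNReal.toReal_nonneg

/-- truncation of `ψ` to coordinates where `P` holds -/
def trunc (ψ : l2Z) : l2Z := ⟨fun x => if P x then ψ x else 0, memℓp_trunc P ψ⟩

@[simp] lemma trunc_apply (ψ : l2Z) (x : ℤ) : trunc P ψ x = if P x then ψ x else 0 := rfl

/-- the closed span of singles at coordinates where `P` holds -/
def spanP : Submodule ℂ l2Z :=
  (Submodule.span ℂ {v : l2Z | ∃ x : ℤ, P x ∧ v = lp.single 2 x 1}).topologicalClosure

lemma trunc_mem_spanP (ψ : l2Z) : trunc P ψ ∈ spanP P := by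
  have hs := lp.hasSum_single (by norm_num : (2 : ℝ≥0∞) ≠ ⊤) (trunc P ψ)
  have hmem : ∀ s : Finset ℤ, (∑ x ∈ s, lp.single 2 x (trunc P ψ x)) ∈
      Submodule.span ℂ {v : l2Z | ∃ x : ℤ, P x ∧ v = lp.single 2 x 1} := by
    intro s
    refine Submodule.sum_mem _ (fun x _ => ?_)
    by_cases hx : P x
    · have : lp.single 2 x (trunc P ψ x) = (trunc P ψ x) • (lp.single 2 x (1:ℂ) : l2Z) := by
        rw [← lp.single_smul, smul_eq_mul, mul_one]
      rw [this]
      exact Submodule.smul_mem _ _ (Submodule.subset_span ⟨x, hx, rfl⟩)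
    · have : trunc P ψ x = 0 := by simp [hx]
      rw [this]
      have h0 : (lp.single 2 x (0:ℂ) : l2Z) = 0 := by
        ext j
        simp [lp.single_apply]
      rw [h0]
      exact Submodule.zero_mem _
  have : trunc P ψ ∈ closure ((Submodule.span ℂ
      {v : l2Z | ∃ x : ℤ, P x ∧ v = lp.single 2 x 1} : Submodule ℂ l2Z) : Set l2Z) :=
    mem_closure_of_tendsto hs (Eventually.of_forall fun s => hmem s)
  exact this

lemma inner_trunc_orth (ψ : l2Z) : ψ - trunc P ψ ∈ (spanP P)ᗮ := by
  rw [Submodule.mem_orthogonal']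
  intro u hu
  have hker : spanP P ≤ LinearMap.ker (innerSL ℂ (ψ - trunc P ψ) : l2Z →ₗ[ℂ] ℂ) := by
    refine Submodule.topologicalClosure_minimal _ ?_ (ContinuousLinearMap.isClosed_ker (innerSL ℂ (ψ - trunc P ψ)))
    rw [Submodule.span_le]
    rintro v ⟨x, hx, rfl⟩
    simp only [SetLike.mem_coe, LinearMap.mem_ker]
    show (innerSL ℂ (ψ - trunc P ψ)) (lp.single 2 x 1) = 0
    rw [innerSL_apply_apply, lp.inner_single_right]
    have : (ψ - trunc P ψ) x = ψ x - trunc P ψ x := by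
      rw [lp.coeFn_sub]; rfl
    simp [this, hx]
  have h2 := hker hu
  rw [LinearMap.mem_ker] at h2
  exact h2

instance : CompleteSpace (spanP P) :=
  (Submodule.isClosed_topologicalClosure _).completeSpace_coe

lemma orthProj_spanP (ψ : l2Z) :
    (Submodule.orthogonalProjectionOnto (spanP P) ψ : l2Z) = trunc P ψ :=
  Submodule.eq_starProjection_of_mem_orthogonal (trunc_mem_spanP P ψ) (inner_trunc_orth P ψ)

end ProjFormula


section ShiftFacts

/-- the right shift, inverse of `Lop` -/
def Rop : l2Z →L[ℂ] l2Z := shiftL.symm.toLinearIsometry.toContinuousLinearMap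

lemma Lop_apply (ψ : l2Z) (x : ℤ) : Lop ψ x = ψ (x + 1) := rfl
lemma Rop_apply (ψ : l2Z) (x : ℤ) : Rop ψ x = ψ (x - 1) := rfl

lemma adjoint_Lop : ContinuousLinearMap.adjoint Lop = Rop := by
  symm
  rw [ContinuousLinearMap.eq_adjoint_iff]
  intro ψ φ
  rw [lp.inner_eq_tsum, lp.inner_eq_tsum]
  calc ∑' i, (inner ℂ (Rop ψ i) (φ i) : ℂ)
      = ∑' j, (inner ℂ (Rop ψ (j + 1)) (φ (j + 1)) : ℂ) :=
        ((Equiv.addRight (1:ℤ)).tsum_eq fun i => (inner ℂ (Rop ψ i) (φ i) : ℂ)).symm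
    _ = ∑' j, (inner ℂ (ψ j) (Lop φ j) : ℂ) := by
        congr 1
        funext j
        rw [Rop_apply, Lop_apply, add_sub_cancel_right]

lemma star_Lop : star Lop = Rop := by
  rw [ContinuousLinearMap.star_eq_adjoint, adjoint_Lop]

lemma Rop_comp_Lop : Rop ∘L Lop = 1 := by
  ext ψ x
  show Lop ψ (x - 1) = ψ x
  rw [Lop_apply, sub_add_cancel]

lemma Lop_comp_Rop : Lop ∘L Rop = 1 := by
  ext ψ x
  show Rop ψ (x + 1) = ψ x
  rw [Rop_apply, add_sub_cancel_right]

lemma Lop_unitary : Lop ∈ unitary (l2Z →L[ℂ] l2Z) := by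
  rw [Unitary.mem_iff, star_Lop]
  exact ⟨Rop_comp_Lop, Lop_comp_Rop⟩

instance : IsStarNormal Lop := by
  constructor
  rw [Commute, SemiconjBy, star_Lop]
  show Rop ∘L Lop = Lop ∘L Rop
  rw [Rop_comp_Lop, Lop_comp_Rop]

lemma spec_Lop : spectrum ℂ Lop ⊆ TCirc :=
  spectrum.subset_circle_of_unitary Lop_unitary

end ShiftFacts

section CfcFacts

lemma circExt_apply_mem (h : C(TCirc, ℂ)) {z : ℂ} (hz : z ∈ TCirc) :
    circExt h z = h ⟨z, hz⟩ := dif_pos hz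

lemma continuousOn_circExt (h : C(TCirc, ℂ)) : ContinuousOn (circExt h) TCirc := by
  rw [continuousOn_iff_continuous_restrict]
  convert h.continuous using 1
  funext z
  exact dif_pos z.2

lemma continuousOn_circExt_spec (h : C(TCirc, ℂ)) :
    ContinuousOn (circExt h) (spectrum ℂ Lop) := (continuousOn_circExt h).mono spec_Lop

lemma opC_sub (a b : C(TCirc, ℂ)) : opC (a - b) Lop = opC a Lop - opC b Lop := by
  have h1 : cfc (circExt (a - b)) Lop = cfc (fun z => circExt a z - circExt b z) Lop :=
    cfc_congr fun z hz => by
      have h := spec_Lop hz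
      rw [circExt_apply_mem _ h, circExt_apply_mem _ h, circExt_apply_mem _ h]
      simp
  rw [opC, h1, cfc_sub _ _ Lop (continuousOn_circExt_spec a) (continuousOn_circExt_spec b)]
  rfl

lemma opC_add (a b : C(TCirc, ℂ)) : opC (a + b) Lop = opC a Lop + opC b Lop := by
  have h1 : cfc (circExt (a + b)) Lop = cfc (fun z => circExt a z + circExt b z) Lop :=
    cfc_congr fun z hz => by
      have h := spec_Lop hz
      rw [circExt_apply_mem _ h, circExt_apply_mem _ h, circExt_apply_mem _ h]
      simp
  rw [opC, h1, cfc_add Lop _ _ (continuousOn_circExt_spec a) (continuousOn_circExt_spec b)]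
  rfl

lemma opC_mul (a b : C(TCirc, ℂ)) : opC (a * b) Lop = opC a Lop * opC b Lop := by
  have h1 : cfc (circExt (a * b)) Lop = cfc (fun z => circExt a z * circExt b z) Lop :=
    cfc_congr fun z hz => by
      have h := spec_Lop hz
      rw [circExt_apply_mem _ h, circExt_apply_mem _ h, circExt_apply_mem _ h]
      simp
  rw [opC, h1, cfc_mul _ _ Lop (continuousOn_circExt_spec a) (continuousOn_circExt_spec b)]
  rfl

lemma opC_algebraMap (c : ℂ) :
    opC (algebraMap ℂ C(TCirc, ℂ) c) Lop = algebraMap ℂ (l2Z →L[ℂ] l2Z) c := by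
  have h1 : cfc (circExt (algebraMap ℂ C(TCirc, ℂ) c)) Lop = cfc (fun _ : ℂ => c) Lop :=
    cfc_congr fun z hz => by
      rw [circExt_apply_mem _ (spec_Lop hz)]
      rfl
  rw [opC, h1, cfc_const c Lop]

lemma norm_opC_le (h : C(TCirc, ℂ)) : ‖opC h Lop‖ ≤ ‖h‖ :=
  norm_cfc_le (norm_nonneg h) fun z hz => by
    rw [circExt_apply_mem _ (spec_Lop hz)]
    exact ContinuousMap.norm_coe_le_norm h _

/-- the coordinate function `z` on the circle -/
def chi1 : C(TCirc, ℂ) := ⟨fun z => (z : ℂ), continuous_subtype_val⟩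

/-- the conjugate coordinate function on the circle -/
def chis : C(TCirc, ℂ) := star chi1

lemma opC_chi1 : opC chi1 Lop = Lop := by
  have h1 : cfc (circExt chi1) Lop = cfc (id : ℂ → ℂ) Lop :=
    cfc_congr fun z hz => by rw [circExt_apply_mem _ (spec_Lop hz)]; rfl
  rw [opC, h1, cfc_id ℂ Lop]

lemma opC_chis : opC chis Lop = Rop := by
  have h1 : cfc (circExt chis) Lop = cfc (fun z : ℂ => star (id z)) Lop :=
    cfc_congr fun z hz => by rw [circExt_apply_mem _ (spec_Lop hz)]; rfl
  rw [opC, h1, cfc_star, cfc_id ℂ Lop, star_Lop]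

end CfcFacts


section Hankel

lemma Pge_apply (ψ : l2Z) (x : ℤ) : Pge ψ x = if 0 ≤ x then ψ x else 0 := by
  have h : Pge ψ = (Submodule.orthogonalProjectionOnto (spanP fun y : ℤ => 0 ≤ y) ψ : l2Z) := rfl
  rw [h, orthProj_spanP]
  rfl

lemma Ple_apply (ψ : l2Z) (x : ℤ) : Ple ψ x = if x ≤ -1 then ψ x else 0 := by
  have h : Ple ψ = (Submodule.orthogonalProjectionOnto (spanP fun y : ℤ => y ≤ -1) ψ : l2Z) := rfl
  rw [h, orthProj_spanP]
  rfl

lemma Pge_add_Ple : (Pge : l2Z →L[ℂ] l2Z) + Ple = 1 := by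
  ext ψ x
  have h1 : (Pge + Ple) ψ x = Pge ψ x + Ple ψ x := by
    rw [ContinuousLinearMap.add_apply, lp.coeFn_add, Pi.add_apply]
  rw [h1, Pge_apply, Ple_apply]
  show _ = ψ x
  by_cases h : 0 ≤ x
  · rw [if_pos h, if_neg (by omega), add_zero]
  · rw [if_neg h, if_pos (by omega), zero_add]

lemma Ple_eq : (Ple : l2Z →L[ℂ] l2Z) = 1 - Pge := by
  rw [← Pge_add_Ple]; abel

lemma isCompactOperator_rankOne (v : l2Z) (φ : l2Z → ℂ)
    (hb : ∀ ψ : l2Z, ψ ∈ Metric.ball (0:l2Z) 1 → ‖φ ψ‖ ≤ 1) :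
    IsCompactOperator fun ψ => φ ψ • v := by
  refine ⟨(fun c : ℂ => c • v) '' Metric.closedBall 0 1,
    (isCompact_closedBall (0:ℂ) 1).image (by continuity), ?_⟩
  refine Filter.mem_of_superset (Metric.ball_mem_nhds 0 one_pos) ?_
  intro ψ hψ
  exact ⟨φ ψ, mem_closedBall_zero_iff.mpr (hb ψ hψ), rfl⟩

lemma norm_apply_le_one {ψ : l2Z} (hψ : ψ ∈ Metric.ball (0:l2Z) 1) (x : ℤ) : ‖ψ x‖ ≤ 1 :=
  (lp.norm_apply_le_norm (by norm_num) ψ x).trans (mem_ball_zero_iff.mp hψ).le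

/-- the Hankel operator `P_{≤-1} h(L) P_{≥0}` -/
def Hk (h : C(TCirc, ℂ)) : l2Z →L[ℂ] l2Z := Ple ∘L opC h Lop ∘L Pge

/-- the Hankel operator `P_{≥0} h(L) P_{≤-1}` -/
def Hk' (h : C(TCirc, ℂ)) : l2Z →L[ℂ] l2Z := Pge ∘L opC h Lop ∘L Ple

lemma Hk_chi1_eq (ψ : l2Z) : Hk chi1 ψ = ψ 0 • (lp.single 2 (-1) 1 : l2Z) := by
  have h : Hk chi1 ψ = Ple (Lop (Pge ψ)) := by rw [Hk, opC_chi1]; rfl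
  rw [h]
  ext x
  have hr : (ψ 0 • (lp.single 2 (-1) 1 : l2Z)) x = ψ 0 * (lp.single 2 (-1) (1:ℂ) : l2Z) x := rfl
  rw [hr, Ple_apply, Lop_apply, Pge_apply]
  by_cases hx : x = (-1 : ℤ)
  · subst hx
    rw [if_pos (by norm_num), if_pos (by norm_num), lp.single_apply_self, mul_one]
    have he : (-1 + 1 : ℤ) = 0 := by omega
    rw [he]
  · rw [lp.single_apply_ne _ _ _ hx, mul_zero]
    by_cases h1 : x ≤ -1
    · rw [if_pos h1, if_neg (by omega)]
    · rw [if_neg h1]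

lemma Hk'_chis_eq (ψ : l2Z) : Hk' chis ψ = ψ (-1) • (lp.single 2 0 1 : l2Z) := by
  have h : Hk' chis ψ = Pge (Rop (Ple ψ)) := by rw [Hk', opC_chis]; rfl
  rw [h]
  ext x
  have hr : (ψ (-1) • (lp.single 2 0 1 : l2Z)) x = ψ (-1) * (lp.single 2 0 (1:ℂ) : l2Z) x := rfl
  rw [hr, Pge_apply, Rop_apply, Ple_apply]
  by_cases hx : x = (0 : ℤ)
  · subst hx
    rw [if_pos le_rfl, if_pos (by norm_num), lp.single_apply_self, mul_one]
    have he : (0 - 1 : ℤ) = -1 := by omega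
    rw [he]
  · rw [lp.single_apply_ne _ _ _ hx, mul_zero]
    by_cases h1 : (0:ℤ) ≤ x
    · rw [if_pos h1, if_neg (by omega)]
    · rw [if_neg h1]

lemma Hk'_chi1_eq : Hk' chi1 = 0 := by
  have h : ∀ ψ : l2Z, Hk' chi1 ψ = Pge (Lop (Ple ψ)) := fun ψ => by rw [Hk', opC_chi1]; rfl
  ext ψ x
  rw [h, Pge_apply, Lop_apply, Ple_apply]
  show _ = (0 : ℂ)
  by_cases h1 : (0:ℤ) ≤ x
  · rw [if_pos h1, if_neg (by omega)]
  · rw [if_neg h1]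

lemma Hk_chis_eq : Hk chis = 0 := by
  have h : ∀ ψ : l2Z, Hk chis ψ = Ple (Rop (Pge ψ)) := fun ψ => by rw [Hk, opC_chis]; rfl
  ext ψ x
  rw [h, Ple_apply, Rop_apply, Pge_apply]
  show _ = (0 : ℂ)
  by_cases h1 : x ≤ (-1:ℤ)
  · rw [if_pos h1, if_neg (by omega)]
  · rw [if_neg h1]

lemma Ple_comp_Pge : (Ple : l2Z →L[ℂ] l2Z) ∘L Pge = 0 := by
  ext ψ x
  show Ple (Pge ψ) x = (0 : ℂ)
  rw [Ple_apply, Pge_apply]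
  by_cases h1 : x ≤ (-1:ℤ)
  · rw [if_pos h1, if_neg (by omega)]
  · rw [if_neg h1]

lemma Pge_comp_Ple : (Pge : l2Z →L[ℂ] l2Z) ∘L Ple = 0 := by
  ext ψ x
  show Pge (Ple ψ) x = (0 : ℂ)
  rw [Pge_apply, Ple_apply]
  by_cases h1 : (0:ℤ) ≤ x
  · rw [if_pos h1, if_neg (by omega)]
  · rw [if_neg h1]

lemma Hk_algebraMap (c : ℂ) : Hk (algebraMap ℂ C(TCirc, ℂ) c) = 0 := by
  rw [Hk, opC_algebraMap, Algebra.algebraMap_eq_smul_one]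
  simp only [ContinuousLinearMap.smul_comp, ContinuousLinearMap.comp_smul,
    ContinuousLinearMap.one_def, ContinuousLinearMap.id_comp]
  rw [Ple_comp_Pge, smul_zero]

lemma Hk'_algebraMap (c : ℂ) : Hk' (algebraMap ℂ C(TCirc, ℂ) c) = 0 := by
  rw [Hk', opC_algebraMap, Algebra.algebraMap_eq_smul_one]
  simp only [ContinuousLinearMap.smul_comp, ContinuousLinearMap.comp_smul,
    ContinuousLinearMap.one_def, ContinuousLinearMap.id_comp]
  rw [Pge_comp_Ple, smul_zero]

lemma Hk_add (a b : C(TCirc, ℂ)) : Hk (a + b) = Hk a + Hk b := by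
  rw [Hk, Hk, Hk, opC_add, ContinuousLinearMap.add_comp, ContinuousLinearMap.comp_add]

lemma Hk'_add (a b : C(TCirc, ℂ)) : Hk' (a + b) = Hk' a + Hk' b := by
  rw [Hk', Hk', Hk', opC_add, ContinuousLinearMap.add_comp, ContinuousLinearMap.comp_add]

lemma Hk_sub (a b : C(TCirc, ℂ)) : Hk (a - b) = Hk a - Hk b := by
  rw [Hk, Hk, Hk, opC_sub, ContinuousLinearMap.sub_comp, ContinuousLinearMap.comp_sub]

lemma Hk'_sub (a b : C(TCirc, ℂ)) : Hk' (a - b) = Hk' a - Hk' b := by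
  rw [Hk', Hk', Hk', opC_sub, ContinuousLinearMap.sub_comp, ContinuousLinearMap.comp_sub]

lemma Hk_mul (a b : C(TCirc, ℂ)) :
    Hk (a * b) = Hk a ∘L (opC b Lop ∘L Pge) + (Ple ∘L opC a Lop) ∘L Hk b := by
  simp only [Hk, opC_mul]
  show Ple * (opC a Lop * opC b Lop * Pge) =
    Ple * (opC a Lop * Pge) * (opC b Lop * Pge) + Ple * opC a Lop * (Ple * (opC b Lop * Pge))
  rw [Ple_eq]
  noncomm_ring

lemma Hk'_mul (a b : C(TCirc, ℂ)) :
    Hk' (a * b) = Hk' a ∘L (opC b Lop ∘L Ple) + (Pge ∘L opC a Lop) ∘L Hk' b := by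
  simp only [Hk', opC_mul]
  show Pge * (opC a Lop * opC b Lop * Ple) =
    Pge * (opC a Lop * Ple) * (opC b Lop * Ple) + Pge * opC a Lop * (Pge * (opC b Lop * Ple))
  rw [Ple_eq]
  noncomm_ring

lemma norm_Pge_le : ‖(Pge : l2Z →L[ℂ] l2Z)‖ ≤ 1 := by
  refine ContinuousLinearMap.opNorm_le_bound _ zero_le_one fun ψ => ?_
  rw [one_mul]
  show ‖(Submodule.orthogonalProjectionOnto spanGe ψ : l2Z)‖ ≤ ‖ψ‖
  calc ‖(Submodule.orthogonalProjectionOnto spanGe ψ : l2Z)‖ = ‖Submodule.orthogonalProjectionOnto spanGe ψ‖ := rfl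
    _ ≤ ‖Submodule.orthogonalProjectionOnto spanGe‖ * ‖ψ‖ := (Submodule.orthogonalProjectionOnto spanGe).le_opNorm ψ
    _ ≤ 1 * ‖ψ‖ := by
        gcongr
        exact Submodule.orthogonalProjectionOnto_norm_le _
    _ = ‖ψ‖ := one_mul _

lemma norm_Ple_le : ‖(Ple : l2Z →L[ℂ] l2Z)‖ ≤ 1 := by
  refine ContinuousLinearMap.opNorm_le_bound _ zero_le_one fun ψ => ?_
  rw [one_mul]
  show ‖(Submodule.orthogonalProjectionOnto spanLe ψ : l2Z)‖ ≤ ‖ψ‖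
  calc ‖(Submodule.orthogonalProjectionOnto spanLe ψ : l2Z)‖ = ‖Submodule.orthogonalProjectionOnto spanLe ψ‖ := rfl
    _ ≤ ‖Submodule.orthogonalProjectionOnto spanLe‖ * ‖ψ‖ := (Submodule.orthogonalProjectionOnto spanLe).le_opNorm ψ
    _ ≤ 1 * ‖ψ‖ := by
        gcongr
        exact Submodule.orthogonalProjectionOnto_norm_le _
    _ = ‖ψ‖ := one_mul _

lemma norm_Hk_le (h : C(TCirc, ℂ)) : ‖Hk h‖ ≤ ‖h‖ := by
  calc ‖Hk h‖ ≤ ‖(Ple : l2Z →L[ℂ] l2Z)‖ * ‖opC h Lop ∘L Pge‖ :=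
        ContinuousLinearMap.opNorm_comp_le _ _
    _ ≤ ‖(Ple : l2Z →L[ℂ] l2Z)‖ * (‖opC h Lop‖ * ‖(Pge : l2Z →L[ℂ] l2Z)‖) := by
        gcongr
        exact ContinuousLinearMap.opNorm_comp_le _ _
    _ ≤ 1 * (‖h‖ * 1) := by
        gcongr
        · exact norm_Ple_le
        · exact norm_opC_le h
        · exact norm_Pge_le
    _ = ‖h‖ := by ring

lemma norm_Hk'_le (h : C(TCirc, ℂ)) : ‖Hk' h‖ ≤ ‖h‖ := by
  calc ‖Hk' h‖ ≤ ‖(Pge : l2Z →L[ℂ] l2Z)‖ * ‖opC h Lop ∘L Ple‖ :=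
        ContinuousLinearMap.opNorm_comp_le _ _
    _ ≤ ‖(Pge : l2Z →L[ℂ] l2Z)‖ * (‖opC h Lop‖ * ‖(Ple : l2Z →L[ℂ] l2Z)‖) := by
        gcongr
        exact ContinuousLinearMap.opNorm_comp_le _ _
    _ ≤ 1 * (‖h‖ * 1) := by
        gcongr
        · exact norm_Pge_le
        · exact norm_opC_le h
        · exact norm_Ple_le
    _ = ‖h‖ := by ring

end Hankel


section Laurent

open scoped Topology

lemma isCompact_clm_add {X Y : l2Z →L[ℂ] l2Z} (hX : IsCompactOperator ⇑X)
    (hY : IsCompactOperator ⇑Y) : IsCompactOperator ⇑(X + Y) := by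
  have h : ⇑(X + Y) = ⇑X + ⇑Y := by
    funext ψ
    simp
  rw [h]
  exact hX.add hY

/-- generators: the coordinate function and its conjugate -/
def LaurentSet : Set C(TCirc, ℂ) := {chi1, chis}

lemma star_mem_adjoin_Laurent {h : C(TCirc, ℂ)} (hh : h ∈ Algebra.adjoin ℂ LaurentSet) :
    star h ∈ Algebra.adjoin ℂ LaurentSet := by
  induction hh using Algebra.adjoin_induction with
  | mem x hx =>
    rcases hx with hx | hx
    · rw [hx]
      exact Algebra.subset_adjoin (Or.inr rfl)
    · rw [Set.mem_singleton_iff.mp hx]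
      rw [chis, star_star]
      exact Algebra.subset_adjoin (Or.inl rfl)
  | algebraMap r =>
    rw [← algebraMap_star_comm]
    exact Subalgebra.algebraMap_mem _ _
  | add x y hx hy ihx ihy =>
    rw [star_add]
    exact add_mem ihx ihy
  | mul x y hx hy ihx ihy =>
    rw [star_mul]
    exact mul_mem ihy ihx

/-- the star subalgebra of Laurent polynomials on the circle -/
def LaurentAlg : StarSubalgebra ℂ C(TCirc, ℂ) where
  toSubalgebra := Algebra.adjoin ℂ LaurentSet
  star_mem' := star_mem_adjoin_Laurent

lemma LaurentAlg_separates : LaurentAlg.SeparatesPoints := by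
  intro x y hxy
  refine ⟨⇑chi1, ⟨chi1, Algebra.subset_adjoin (Or.inl rfl), rfl⟩, ?_⟩
  exact fun h => hxy (Subtype.ext h)

lemma LaurentAlg_dense : LaurentAlg.topologicalClosure = ⊤ :=
  ContinuousMap.starSubalgebra_topologicalClosure_eq_top_of_separatesPoints
    LaurentAlg LaurentAlg_separates

lemma isCompact_Hk_adjoin {p : C(TCirc, ℂ)} (hp : p ∈ Algebra.adjoin ℂ LaurentSet) :
    IsCompactOperator ⇑(Hk p) ∧ IsCompactOperator ⇑(Hk' p) := by
  induction hp using Algebra.adjoin_induction with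
  | mem x hx =>
    rcases hx with hx | hx
    · rw [hx]
      constructor
      · have he : ⇑(Hk chi1) = fun ψ : l2Z => ψ 0 • (lp.single 2 (-1) 1 : l2Z) :=
          funext Hk_chi1_eq
        rw [he]
        exact isCompactOperator_rankOne _ _ fun ψ hψ => norm_apply_le_one hψ 0
      · rw [Hk'_chi1_eq]
        exact isCompactOperator_zero
    · rw [Set.mem_singleton_iff.mp hx]
      constructor
      · rw [Hk_chis_eq]
        exact isCompactOperator_zero
      · have he : ⇑(Hk' chis) = fun ψ : l2Z => ψ (-1) • (lp.single 2 0 1 : l2Z) :=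
          funext Hk'_chis_eq
        rw [he]
        exact isCompactOperator_rankOne _ _ fun ψ hψ => norm_apply_le_one hψ (-1)
  | algebraMap r =>
    rw [Hk_algebraMap, Hk'_algebraMap]
    exact ⟨isCompactOperator_zero, isCompactOperator_zero⟩
  | add x y hx hy ihx ihy =>
    rw [Hk_add, Hk'_add]
    exact ⟨(ihx.1.add ihy.1 : _), (ihx.2.add ihy.2 : _)⟩
  | mul x y hx hy ihx ihy =>
    constructor
    · rw [Hk_mul]
      refine isCompact_clm_add ?_ ?_
      · rw [ContinuousLinearMap.coe_comp']
        exact ihx.1.comp_clm _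
      · rw [ContinuousLinearMap.coe_comp']
        exact ihy.1.clm_comp _
    · rw [Hk'_mul]
      refine isCompact_clm_add ?_ ?_
      · rw [ContinuousLinearMap.coe_comp']
        exact ihx.2.comp_clm _
      · rw [ContinuousLinearMap.coe_comp']
        exact ihy.2.clm_comp _

lemma isCompact_Hk (h : C(TCirc, ℂ)) :
    IsCompactOperator ⇑(Hk h) ∧ IsCompactOperator ⇑(Hk' h) := by
  have hcl : h ∈ closure (LaurentAlg : Set C(TCirc, ℂ)) := by
    have : h ∈ LaurentAlg.topologicalClosure := by
      rw [LaurentAlg_dense]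
      trivial
    exact this
  obtain ⟨u, hu, hlim⟩ := mem_closure_iff_seq_limit.mp hcl
  have hnorm : Tendsto (fun n => ‖u n - h‖) atTop (nhds 0) := by
    rw [← tendsto_iff_norm_sub_tendsto_zero]
    exact hlim
  constructor
  · refine isCompactOperator_of_tendsto (l := atTop) (F := fun n => Hk (u n)) ?_
      (Eventually.of_forall fun n => (isCompact_Hk_adjoin (hu n)).1)
    rw [tendsto_iff_norm_sub_tendsto_zero]
    refine squeeze_zero (fun n => norm_nonneg _) (fun n => ?_) hnorm
    rw [← Hk_sub]
    exact norm_Hk_le _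
  · refine isCompactOperator_of_tendsto (l := atTop) (F := fun n => Hk' (u n)) ?_
      (Eventually.of_forall fun n => (isCompact_Hk_adjoin (hu n)).2)
    rw [tendsto_iff_norm_sub_tendsto_zero]
    refine squeeze_zero (fun n => norm_nonneg _) (fun n => ?_) hnorm
    rw [← Hk'_sub]
    exact norm_Hk'_le _

end Laurent

lemma Aop_sub_Bop_eq (f g : C(TCirc, ℂ)) : Aop f g - Bop f g = Hk g + Hk' f := by
  simp only [Aop, Bop, Hk, Hk']
  show (opC g Lop * Pge + opC f Lop * Ple) -
      (Pge * (opC g Lop * Pge) + Ple * (opC f Lop * Ple)) =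
    Ple * (opC g Lop * Pge) + Pge * (opC f Lop * Ple)
  rw [Ple_eq]
  noncomm_ring


/-- **`A(f,g) - B(f,g)` is compact.**  For any continuous `f, g : 𝕋 → ℂ`, the difference
`A(f,g) - B(f,g)` is a compact operator on `ℓ²(ℤ)`. -/
theorem isCompactOperator_Aop_sub_Bop (f g : C(TCirc, ℂ)) :
    IsCompactOperator ⇑(Aop f g - Bop f g) := by
  rw [Aop_sub_Bop_eq]
  exact isCompact_clm_add (isCompact_Hk g).1 (isCompact_Hk f).2
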